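/- (Astuti–Wimmer) Let V be a finite-dimensional vector space over a field F and let f : V → V be a linear operator whose minimal polynomial splits into linear factors over F. If F has more than two elements, then every characteristic subspace of V for f is hyperinvariant for f. -/

import Mathlib

/-!
Every `g` commuting with `f` is a sum of two units of the commutative Artinian algebra `F[g]`:
by the Chinese remainder theorem choose `r ∈ F[g]` avoiding both `0` and `g` modulo each of the
finitely many maximal ideals (possible because every residue field contains `F`, hence has more
than two elements); then `r` and `g - r` are units. Both lie in `F[g]`, so they commute with `f`,
and a characteristic subspace is stable under each of them, hence under `g`.
-/

/-- A subspace `Y` is hyperinvariant for `f` if `g Y ⊆ Y` for every endomorphism `g`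
commuting with `f`. -/
def HyperinvariantSubspace {F V : Type*} [Field F] [AddCommGroup V] [Module F V]
    (f : Module.End F V) (Y : Submodule F V) : Prop :=
  ∀ g : Module.End F V, Commute g f → ∀ x ∈ Y, g x ∈ Y

/-- A subspace `Y` is characteristic for `f` if it is `f`-invariant and `g Y ⊆ Y` for every
invertible endomorphism `g` commuting with `f`. -/
def CharacteristicSubspace {F V : Type*} [Field F] [AddCommGroup V] [Module F V]
    (f : Module.End F V) (Y : Submodule F V) : Prop :=
  (∀ x ∈ Y, f x ∈ Y) ∧
    ∀ g : Module.End F V, IsUnit g → Commute g f → ∀ x ∈ Y, g x ∈ Y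

open Cardinal

theorem exists_isUnit_add_isUnit_eq_of_two_lt_mk_quotient {R : Type*} [CommRing R]
    [Finite (MaximalSpectrum R)] (hres : ∀ m : MaximalSpectrum R, 2 < #(R ⧸ m.asIdeal))
    (a : R) : ∃ u v : R, IsUnit u ∧ IsUnit v ∧ u + v = a := by
  choose c hc0 hca using fun m : MaximalSpectrum R =>
    exists_ne_ne_of_three_le (by exact_mod_cast natCast_add_one_le_iff.mpr (hres m)) 0
      (Ideal.Quotient.mk m.asIdeal a)
  obtain ⟨r, hr⟩ := Ideal.pi_quotient_surjective
    (fun _ _ h => MaximalSpectrum.isCoprime_of_ne h) c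
  have isUnit_of_forall_ne_zero {b : R}
      (hb : ∀ m : MaximalSpectrum R, Ideal.Quotient.mk m.asIdeal b ≠ 0) : IsUnit b := by
    by_contra h
    obtain ⟨I, hI, hbI⟩ := exists_max_ideal_of_mem_nonunits h
    exact hb ⟨I, hI⟩ (Ideal.Quotient.eq_zero_iff_mem.mpr hbI)
  refine ⟨r, a - r, isUnit_of_forall_ne_zero fun m => ?_,
    isUnit_of_forall_ne_zero fun m => ?_, add_sub_cancel r a⟩
  · rw [hr m]
    exact hc0 m
  · rw [map_sub, hr m, sub_ne_zero]
    exact (hca m).symm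

theorem IsArtinianRing.exists_isUnit_add_isUnit_eq {F R : Type*} [Field F] [CommRing R]
    [Algebra F R] [IsArtinianRing R] (hF : 2 < #F) (a : R) :
    ∃ u v : R, IsUnit u ∧ IsUnit v ∧ u + v = a := by
  refine exists_isUnit_add_isUnit_eq_of_two_lt_mk_quotient (fun m => ?_) a
  have hle := lift_mk_le_lift_mk_of_injective (algebraMap F (R ⧸ m.asIdeal)).injective
  simpa using (lift_lt.mpr hF).trans_le hle

open scoped IsMulCommutative in
theorem exists_mem_adjoin_isUnit_add_isUnit_eq {F A : Type*} [Field F] [Ring A] [Algebra F A]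
    [FiniteDimensional F A] (hF : 2 < #F) (a : A) :
    ∃ u ∈ Algebra.adjoin F {a}, ∃ v ∈ Algebra.adjoin F {a}, IsUnit u ∧ IsUnit v ∧ u + v = a := by
  have : IsArtinianRing (Algebra.adjoin F {a}) := isArtinian_of_tower F inferInstance
  obtain ⟨u, v, hu, hv, huv⟩ := IsArtinianRing.exists_isUnit_add_isUnit_eq hF
    (⟨a, Algebra.self_mem_adjoin_singleton F a⟩ : Algebra.adjoin F {a})
  exact ⟨u, u.2, v, v.2, hu.map (Algebra.adjoin F {a}).val, hv.map (Algebra.adjoin F {a}).val,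
    congrArg Subtype.val huv⟩

theorem characteristic_eq_hyperinvariant_of_two_lt_card_general
    {F V : Type*} [Field F] [AddCommGroup V] [Module F V] [FiniteDimensional F V]
    (f : Module.End F V)
    (hcard : 2 < Cardinal.mk F)
    (Y : Submodule F V) (hY : CharacteristicSubspace f Y) :
    HyperinvariantSubspace f Y := by
  intro g hg x hx
  obtain ⟨u, hu, v, hv, hu_unit, hv_unit, rfl⟩ := exists_mem_adjoin_isUnit_add_isUnit_eq hcard g
  have hu_comm := (Algebra.commute_of_mem_adjoin_singleton_of_commute hu hg.symm).symm
  have hv_comm := (Algebra.commute_of_mem_adjoin_singleton_of_commute hv hg.symm).symm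
  exact Y.add_mem (hY.2 u hu_unit hu_comm x hx) (hY.2 v hv_unit hv_comm x hx)

/-- Astuti–Wimmer: If the minimal polynomial of `f` splits over `F` and `F`
has more than two elements, then every characteristic subspace for `f` is hyperinvariant
for `f`. -/
theorem characteristic_eq_hyperinvariant_of_two_lt_card
    {F V : Type*} [Field F] [AddCommGroup V] [Module F V] [FiniteDimensional F V]
    (f : Module.End F V)
    (hsplit : (minpoly F f).Splits)
    (hcard : 2 < Cardinal.mk F)
    (Y : Submodule F V) (hY : CharacteristicSubspace f Y) :
    HyperinvariantSubspace f Y :=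
  characteristic_eq_hyperinvariant_of_two_lt_card_general f hcard Y hY
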